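/- Let M ≥ 2, m ≥ 1, let W₁,…,W_m be i.i.d. with distribution P₁ and B₁,…,B_m i.i.d. with distribution P₂ (all independent), and set A_i := (2π σ̂(1))^{-1} Re(f̂(W_i) e^{-i B_i}) / (p₁(W_i) p₂(B_i)). Let f₁(x) := ∫_{{‖ω‖₁ ≤ M}} ∫_{{|b| ≤ 2M}} (2π σ̂(1))^{-1} σ(ω·x+b) Re(f̂(ω) e^{-ib}) db dω. Then there is a constant C > 0 depending only on σ such that 𝔼[ ∫_Ω ( f₁(x) − (1/m) Σ_{i=1}^m A_i σ(W_i·x + B_i) )² dx ] ≤ (C/m) · C_d M^{d+1} · ‖f̂‖_{L^∞(ℝ^d)} · ∫_{ℝ^d} (1+‖ω‖₁) |f̂(ω)| dω. -/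

import Mathlib

/-!
Fix `x`. Writing `h_x(ω, b)` for the integrand of `f₁(x)` and `κ = C_d M^d · 4M = 1 / (p₁ p₂)`,
the network is the empirical mean of the i.i.d. samples `g_x(W_i, B_i)` with `g_x = κ h_x`, whose
mean under `P₁ ⊗ P₂` is `f₁(x)`. So the squared error at `x` has expectation
`Var(g_x) / m ≤ 𝔼[g_x²] / m = κ ∫∫ h_x² / m`. As `σ` is bounded by `2¹⁰` and supported in
`[-2, 2]`, `∫ σ(ω·x + b)² db ≤ 2²²`, while `Re(f̂(ω) e^{-ib})² ≤ ‖f̂‖_∞ |f̂(ω)|`; hence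
`∫∫ h_x² ≤ (2π σ̂(1))⁻² ‖f̂‖_∞ 2²² ∫ |f̂|`. Tonelli and `vol Ω ≤ 1` then move the bound from
each `x` to the integral over `Ω`.
-/

open MeasureTheory

/-- The ℓ¹-norm of a vector in `ℝ^d`. -/
noncomputable def l1norm {d : ℕ} (ω : Fin d → ℝ) : ℝ := ∑ i, |ω i|

/-- The Euclidean inner product on `ℝ^d`. -/
noncomputable def dotp {d : ℕ} (ω x : Fin d → ℝ) : ℝ := ∑ i, ω i * x i

/-- The compactly supported `ReLU³`-difference activation. -/
noncomputable def act (t : ℝ) : ℝ :=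
  ∑ i ∈ Finset.range 5, (-1 : ℝ) ^ i * (Nat.choose 4 i : ℝ) * max 0 (t + 2 - i) ^ 3

/-- `C_d`: the Lebesgue volume of the unit `ℓ¹`-ball in `ℝ^d`. -/
noncomputable def Cvol (d : ℕ) : ℝ := (volume {ω : Fin d → ℝ | l1norm ω ≤ 1}).toReal

/-- `P₁`: the uniform probability distribution on `{ω : ‖ω‖₁ ≤ M}`
(with density `1/(C_d M^d)`). -/
noncomputable def P1unif (d : ℕ) (M : ℝ) : Measure (Fin d → ℝ) :=
  (ENNReal.ofReal (Cvol d * M ^ d))⁻¹ • volume.restrict {ω : Fin d → ℝ | l1norm ω ≤ M}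

/-- `P₂`: the uniform probability distribution on `{b : |b| ≤ 2M}`
(with density `1/(4M)`). -/
noncomputable def P2unif (M : ℝ) : Measure ℝ :=
  (ENNReal.ofReal (4 * M))⁻¹ • volume.restrict {b : ℝ | |b| ≤ 2 * M}

open ProbabilityTheory
open scoped Pointwise

section Activation
variable {t : ℝ}

@[fun_prop]
lemma continuous_act : Continuous act := by
  unfold act; fun_prop

lemma act_eq_zero_of_le (ht : t ≤ -2) : act t = 0 :=
  Finset.sum_eq_zero fun i _ => by
    rw [max_eq_left (by linarith [(i.cast_nonneg : (0 : ℝ) ≤ i)])]; simp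

-- the fourth finite difference of a cubic vanishes
lemma act_eq_zero_of_ge (ht : 2 ≤ t) : act t = 0 := by
  have h : ∀ i ∈ Finset.range 5, max 0 (t + 2 - i) = t + 2 - i := fun i hi =>
    max_eq_right (by linarith [show (i : ℝ) ≤ 4 by exact_mod_cast Finset.mem_range_succ_iff.mp hi])
  rw [act, Finset.sum_congr rfl fun i hi => by rw [h i hi]]
  simp only [Finset.sum_range_succ, Finset.sum_range_zero, Nat.choose]
  push_cast
  ring

lemma act_eq_zero_of_notMem_Ioo (ht : t ∉ Set.Ioo (-2) 2) : act t = 0 := by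
  rcases not_and_or.mp ht with h | h
  · exact act_eq_zero_of_le (not_lt.mp h)
  · exact act_eq_zero_of_ge (not_lt.mp h)

lemma abs_act_le (t : ℝ) : |act t| ≤ 1024 := by
  rcases le_or_gt t 2 with ht | ht
  · calc |act t| ≤ ∑ i ∈ Finset.range 5, (Nat.choose 4 i : ℝ) * 4 ^ 3 := by
          refine (Finset.abs_sum_le_sum_abs _ _).trans (Finset.sum_le_sum fun i _ => ?_)
          rw [abs_mul, abs_mul, abs_pow, abs_neg, abs_one, one_pow, one_mul, Nat.abs_cast, abs_pow,
            abs_of_nonneg (le_max_left _ _)]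
          gcongr
          exact max_le (by norm_num) (by linarith [(i.cast_nonneg : (0 : ℝ) ≤ i)])
      _ = 1024 := by simp [Finset.sum_range_succ, Nat.choose]; norm_num
  · rw [act_eq_zero_of_ge ht.le, abs_zero]; norm_num

lemma act_sq_le (t : ℝ) : act t ^ 2 ≤ 2 ^ 20 := by
  rw [← sq_abs]
  exact (pow_le_pow_left₀ (abs_nonneg _) (abs_act_le t) 2).trans_eq (by norm_num)

lemma act_sq_eq_zero_of_notMem_Icc (ht : t ∉ Set.Icc (-2) 2) : act t ^ 2 = 0 := by
  rw [act_eq_zero_of_notMem_Ioo fun h => ht (Set.Ioo_subset_Icc_self h), zero_pow two_ne_zero]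

lemma integrable_act_sq : Integrable fun t => act t ^ 2 :=
  (continuous_act.pow 2).integrable_of_hasCompactSupport <|
    HasCompactSupport.intro isCompact_Icc fun _ => act_sq_eq_zero_of_notMem_Icc

lemma integral_act_sq_le : ∫ t, act t ^ 2 ≤ 2 ^ 22 := by
  rw [← setIntegral_eq_integral_of_forall_compl_eq_zero fun _ => act_sq_eq_zero_of_notMem_Icc]
  refine (Real.le_norm_self _).trans ((norm_setIntegral_le_of_norm_le_const (C := 2 ^ 20)
    measure_Icc_lt_top fun t _ => ?_).trans_eq ?_)
  · rw [Real.norm_of_nonneg (sq_nonneg _)]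
    exact act_sq_le t
  · rw [Real.volume_real_Icc]; norm_num
lemma setIntegral_act_sq_le (u : ℝ) (s : Set ℝ) : ∫ b in s, act (u + b) ^ 2 ≤ 2 ^ 22 := by
  refine (setIntegral_le_integral ?_ (.of_forall fun _ => sq_nonneg _)).trans ?_
  · exact integrable_act_sq.comp_add_left u
  · rw [integral_add_left_eq_self (fun t => act t ^ 2) u]
    exact integral_act_sq_le

end Activation

section L1Ball
variable {d : ℕ}

@[fun_prop]
lemma continuous_l1norm : Continuous (l1norm (d := d)) := by
  unfold l1norm; fun_prop

lemma l1norm_nonneg (ω : Fin d → ℝ) : 0 ≤ l1norm ω :=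
  Finset.sum_nonneg fun _ _ => abs_nonneg _

lemma abs_le_l1norm (ω : Fin d → ℝ) (i : Fin d) : |ω i| ≤ l1norm ω :=
  Finset.single_le_sum (fun j _ => abs_nonneg (ω j)) (Finset.mem_univ i)

lemma l1norm_smul (c : ℝ) (ω : Fin d → ℝ) : l1norm (c • ω) = |c| * l1norm ω := by
  simp only [l1norm, Finset.mul_sum, Pi.smul_apply, smul_eq_mul, abs_mul]

lemma volume_l1ball_lt_top (M : ℝ) : volume {ω : Fin d → ℝ | l1norm ω ≤ M} < ⊤ := by
  have hsub : {ω : Fin d → ℝ | l1norm ω ≤ M} ⊆ Set.univ.pi fun _ => Set.Icc (-M) M :=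
    fun ω hω i _ => abs_le.mp ((abs_le_l1norm ω i).trans hω)
  exact (measure_mono hsub).trans_lt (isCompact_univ_pi fun _ => isCompact_Icc).measure_lt_top

lemma volume_l1ball_pos : 0 < volume {ω : Fin d → ℝ | l1norm ω ≤ 1} :=
  ((isOpen_lt (f := l1norm) (g := fun _ => 1) (by fun_prop) continuous_const).measure_pos volume
    ⟨0, by simp [l1norm]⟩).trans_le (measure_mono fun ω (hω : l1norm ω < 1) => hω.le)

lemma Cvol_pos : 0 < Cvol d :=
  ENNReal.toReal_pos volume_l1ball_pos.ne' (volume_l1ball_lt_top 1).ne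

lemma volume_l1ball {M : ℝ} (hM : 0 < M) :
    volume {ω : Fin d → ℝ | l1norm ω ≤ M} = ENNReal.ofReal (Cvol d * M ^ d) := by
  have hset : {ω : Fin d → ℝ | l1norm ω ≤ M} = M • {ω : Fin d → ℝ | l1norm ω ≤ 1} := by
    ext ω
    rw [Set.mem_smul_set_iff_inv_smul_mem₀ hM.ne']
    simp only [Set.mem_ofPred_eq, l1norm_smul, abs_of_pos (inv_pos.mpr hM)]
    rw [inv_mul_le_iff₀ hM, mul_one]
  rw [hset, Measure.addHaar_smul, Module.finrank_fintype_fun_eq_card, Fintype.card_fin,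
    abs_of_pos (pow_pos hM d), mul_comm (Cvol d), ENNReal.ofReal_mul (pow_pos hM d).le, Cvol,
    ENNReal.ofReal_toReal (volume_l1ball_lt_top 1).ne]

end L1Ball

lemma volume_abs_le (r : ℝ) : volume {b : ℝ | |b| ≤ r} = ENNReal.ofReal (2 * r) := by
  rw [show {b : ℝ | |b| ≤ r} = Set.Icc (-r) r by ext; simp [abs_le], Real.volume_Icc]
  ring_nf

lemma isProbabilityMeasure_P1unif {d : ℕ} {M : ℝ} (hM : 0 < M) :
    IsProbabilityMeasure (P1unif d M) := by
  constructor
  rw [P1unif, Measure.smul_apply, Measure.restrict_apply_univ, volume_l1ball hM, smul_eq_mul]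
  have := Cvol_pos (d := d)
  exact ENNReal.inv_mul_cancel (ENNReal.ofReal_pos.mpr (by positivity)).ne' ENNReal.ofReal_ne_top

lemma isProbabilityMeasure_P2unif {M : ℝ} (hM : 0 < M) : IsProbabilityMeasure (P2unif M) := by
  constructor
  rw [P2unif, Measure.smul_apply, Measure.restrict_apply_univ, volume_abs_le, smul_eq_mul,
    ← mul_assoc, show (2 : ℝ) * 2 = 4 by norm_num]
  exact ENNReal.inv_mul_cancel (ENNReal.ofReal_pos.mpr (by positivity)).ne' ENNReal.ofReal_ne_top

section MonteCarlo
variable {α : Type*} [MeasurableSpace α] {ν : Measure α} [IsProbabilityMeasure ν] {g : α → ℝ}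

lemma memLp_sampleMean (hg : MemLp g 2 ν) (m : ℕ) :
    MemLp (fun q : Fin m → α => (1 / (m : ℝ)) * ∑ i, g (q i)) 2 (Measure.pi fun _ => ν) :=
  (memLp_finsetSum _ fun i _ =>
    hg.comp_measurePreserving (measurePreserving_eval (fun _ => ν) i)).const_mul _

lemma integral_sampleMean {m : ℕ} (hm : m ≠ 0) (hg : Integrable g ν) :
    ∫ q : Fin m → α, (1 / (m : ℝ)) * ∑ i, g (q i) ∂(Measure.pi fun _ => ν) = ∫ y, g y ∂ν := by
  rw [integral_const_mul, integral_finsetSum _ fun i _ => integrable_comp_eval hg]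
  simp only [integral_comp_eval (μ := fun _ : Fin m => ν) hg.aestronglyMeasurable,
    Finset.sum_const, Finset.card_univ, Fintype.card_fin, nsmul_eq_mul]
  field_simp

theorem integral_sub_sampleMean_sq {m : ℕ} (hm : m ≠ 0) (hg : MemLp g 2 ν) :
    ∫ q : Fin m → α, (∫ y, g y ∂ν - (1 / (m : ℝ)) * ∑ i, g (q i)) ^ 2 ∂(Measure.pi fun _ => ν)
      = Var[g; ν] / m := by
  have hY := memLp_sampleMean hg m
  have hsum : Var[fun q : Fin m → α => ∑ i, g (q i); Measure.pi fun _ => ν]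
      = m * Var[g; ν] := by
    simpa [← Finset.sum_fn] using variance_sum_pi (ι := Fin m) (μ := fun _ => ν) fun _ => hg
  calc _ = Var[fun q : Fin m → α => (1 / (m : ℝ)) * ∑ i, g (q i); Measure.pi fun _ => ν] := by
        rw [variance_eq_integral hY.aestronglyMeasurable.aemeasurable,
          integral_sampleMean hm (hg.integrable one_le_two)]
        congr with q
        ring
    _ = Var[g; ν] / m := by
        rw [variance_const_mul, hsum]
        field_simp

end MonteCarlo

theorem integral_integral_le_of_forall_integral_le {α β : Type*} [MeasurableSpace α]
    [MeasurableSpace β] {μ : Measure α} [SFinite μ] {ν : Measure β} [SFinite ν]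
    (hν : ν Set.univ ≤ 1) {F : α → β → ℝ} (hF : AEMeasurable (Function.uncurry F) (μ.prod ν))
    (hF0 : ∀ a b, 0 ≤ F a b) {B : ℝ} (hB0 : 0 ≤ B) (hint : ∀ b, Integrable (F · b) μ)
    (hB : ∀ b, ∫ a, F a b ∂μ ≤ B) :
    ∫ a, ∫ b, F a b ∂ν ∂μ ≤ B := by
  have henorm : ∀ a b, ‖F a b‖ₑ = ENNReal.ofReal (F a b) := fun a b =>
    Real.enorm_of_nonneg (hF0 a b)
  rw [← ENNReal.ofReal_le_ofReal_iff hB0]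
  calc ENNReal.ofReal (∫ a, ∫ b, F a b ∂ν ∂μ)
      ≤ ∫⁻ a, ∫⁻ b, ENNReal.ofReal (F a b) ∂ν ∂μ := by
        refine (Real.ofReal_le_enorm _).trans ((enorm_integral_le_lintegral_enorm _).trans ?_)
        gcongr with a
        simpa only [henorm] using enorm_integral_le_lintegral_enorm (F a)
    _ = ∫⁻ b, ∫⁻ a, ENNReal.ofReal (F a b) ∂μ ∂ν := lintegral_lintegral_swap hF.ennreal_ofReal
    _ = ∫⁻ b, ENNReal.ofReal (∫ a, F a b ∂μ) ∂ν := by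
        congr with b
        exact (ofReal_integral_eq_lintegral_ofReal (hint b) (.of_forall (hF0 · b))).symm
    _ ≤ ∫⁻ _, ENNReal.ofReal B ∂ν := lintegral_mono fun b => ENNReal.ofReal_le_ofReal (hB b)
    _ ≤ ENNReal.ofReal B := by
        rw [lintegral_const]
        exact mul_le_of_le_one_right' hν

section ParamDomain
variable {d : ℕ} {M : ℝ}

noncomputable def paramVolume (d : ℕ) (M : ℝ) : Measure ((Fin d → ℝ) × ℝ) :=
  (volume.restrict {ω : Fin d → ℝ | l1norm ω ≤ M}).prod (volume.restrict {b : ℝ | |b| ≤ 2 * M})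

instance (M : ℝ) : IsFiniteMeasure (volume.restrict {ω : Fin d → ℝ | l1norm ω ≤ M}) :=
  isFiniteMeasure_restrict.2 (volume_l1ball_lt_top M).ne

instance (r : ℝ) : IsFiniteMeasure (volume.restrict {b : ℝ | |b| ≤ r}) :=
  isFiniteMeasure_restrict.2 (by rw [volume_abs_le]; exact ENNReal.ofReal_ne_top)

instance : IsFiniteMeasure (paramVolume d M) := by
  unfold paramVolume; infer_instance

lemma P1unif_prod_P2unif (hM : 0 ≤ M) :
    (P1unif d M).prod (P2unif M)
      = (ENNReal.ofReal (Cvol d * M ^ d * (4 * M)))⁻¹ • paramVolume d M := by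
  rw [P1unif, P2unif, Measure.prod_smul_left, Measure.prod_smul_right, smul_smul, paramVolume,
    ENNReal.ofReal_mul (p := Cvol d * M ^ d) (by have := Cvol_pos (d := d); positivity),
    ENNReal.mul_inv (.inr ENNReal.ofReal_ne_top) (.inl ENNReal.ofReal_ne_top)]

lemma integral_P1unif_prod_P2unif (hM : 0 ≤ M) (f : (Fin d → ℝ) × ℝ → ℝ) :
    ∫ z, f z ∂(P1unif d M).prod (P2unif M)
      = (Cvol d * M ^ d * (4 * M))⁻¹ * ∫ z, f z ∂paramVolume d M := by
  rw [P1unif_prod_P2unif hM, integral_smul_measure, ENNReal.toReal_inv,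
    ENNReal.toReal_ofReal (by have := Cvol_pos (d := d); positivity), smul_eq_mul]

end ParamDomain

lemma ae_norm_le_eLpNorm_top {α E : Type*} [MeasurableSpace α] [NormedAddCommGroup E]
    {μ : Measure α} {f : α → E} (hf : MemLp f ⊤ μ) :
    ∀ᵐ a ∂μ, ‖f a‖ ≤ (eLpNorm f ⊤ μ).toReal := by
  filter_upwards [ae_le_eLpNormEssSup (f := f) (μ := μ)] with a ha
  rw [eLpNorm_exponent_top]
  have hfin : eLpNormEssSup f μ ≠ ⊤ := by simpa only [eLpNorm_exponent_top] using hf.2.ne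
  simpa using ENNReal.toReal_mono hfin ha

lemma abs_re_mul_exp_neg_I_mul_le (w : ℂ) (b : ℝ) :
    |(w * Complex.exp (-(Complex.I * b))).re| ≤ ‖w‖ := by
  refine (Complex.abs_re_le_norm _).trans_eq ?_
  rw [norm_mul, Complex.norm_exp]
  simp

noncomputable def barronIntegrand (σhat : ℝ) {d : ℕ} (fhat : (Fin d → ℝ) → ℂ) (x : Fin d → ℝ)
    (z : (Fin d → ℝ) × ℝ) : ℝ :=
  (2 * Real.pi * σhat)⁻¹ * act (dotp z.1 x + z.2) *
    (fhat z.1 * Complex.exp (-(Complex.I * z.2))).re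

noncomputable def truncatedBarron (σhat M : ℝ) {d : ℕ} (fhat : (Fin d → ℝ) → ℂ)
    (x : Fin d → ℝ) : ℝ :=
  ∫ ω in {ω : Fin d → ℝ | l1norm ω ≤ M}, ∫ b in {b : ℝ | |b| ≤ 2 * M},
    barronIntegrand σhat fhat x (ω, b)

-- `A σ(W·x + B)` with `A = (2π σ̂(1))⁻¹ Re(f̂(W) e^{-iB}) / (p₁(W) p₂(B))`,
-- where `1 / (p₁ p₂) = C_d M^d · 4M`
noncomputable def barronSample (σhat M : ℝ) {d : ℕ} (fhat : (Fin d → ℝ) → ℂ) (x : Fin d → ℝ)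
    (z : (Fin d → ℝ) × ℝ) : ℝ :=
  ((2 * Real.pi * σhat)⁻¹ * (fhat z.1 * Complex.exp (-(Complex.I * z.2))).re *
    ((Cvol d * M ^ d) * (4 * M))) * act (dotp z.1 x + z.2)

noncomputable def barronSampleError (σhat M : ℝ) {d : ℕ} (fhat : (Fin d → ℝ) → ℂ) {m : ℕ}
    (q : Fin m → (Fin d → ℝ) × ℝ) (x : Fin d → ℝ) : ℝ :=
  (truncatedBarron σhat M fhat x - 1 / m * ∑ i, barronSample σhat M fhat x (q i)) ^ 2

section Barron
variable (σhat : ℝ) {d : ℕ} {fhat : (Fin d → ℝ) → ℂ} {M : ℝ} (x : Fin d → ℝ)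

lemma barronSample_eq : barronSample σhat M fhat x
    = fun z => Cvol d * M ^ d * (4 * M) * barronIntegrand σhat fhat x z := by
  ext z; unfold barronSample barronIntegrand; ring

lemma measurable_truncatedBarron (hfm : Measurable fhat) :
    Measurable (truncatedBarron σhat M fhat) := by
  have h : Measurable fun p : ((Fin d → ℝ) × (Fin d → ℝ)) × ℝ =>
      barronIntegrand σhat fhat p.1.1 (p.1.2, p.2) := by
    unfold barronIntegrand dotp; fun_prop
  exact (h.stronglyMeasurable.integral_prod_right'.integral_prod_right').measurable

lemma measurable_barronSampleError (hfm : Measurable fhat) (m : ℕ) :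
    Measurable (Function.uncurry (barronSampleError σhat M fhat (m := m))) := by
  have := measurable_truncatedBarron σhat (M := M) hfm
  unfold barronSampleError barronSample dotp Function.uncurry; fun_prop

lemma sq_barronIntegrand_le (z : (Fin d → ℝ) × ℝ) :
    barronIntegrand σhat fhat x z ^ 2
      ≤ (2 * Real.pi * σhat)⁻¹ ^ 2 * ‖fhat z.1‖ ^ 2 * act (dotp z.1 x + z.2) ^ 2 := by
  have h := abs_le.mp (abs_re_mul_exp_neg_I_mul_le (fhat z.1) z.2)
  have h2 := sq_le_sq' h.1 h.2
  calc barronIntegrand σhat fhat x z ^ 2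
      = (2 * Real.pi * σhat)⁻¹ ^ 2 * act (dotp z.1 x + z.2) ^ 2 *
          (fhat z.1 * Complex.exp (-(Complex.I * z.2))).re ^ 2 := by
        unfold barronIntegrand; ring
    _ ≤ _ := by nlinarith [sq_nonneg ((2 * Real.pi * σhat)⁻¹ * act (dotp z.1 x + z.2))]

variable (M)

lemma integrable_norm_mul_act_sq (hfm : Measurable fhat) (hf1 : Integrable fhat) :
    Integrable (fun z : (Fin d → ℝ) × ℝ => ‖fhat z.1‖ * act (dotp z.1 x + z.2) ^ 2)
      (paramVolume d M) := by
  refine Integrable.mono' ((hf1.norm.integrableOn.comp_fst _).const_mul (2 ^ 20))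
    (by unfold dotp; fun_prop : Measurable _).aestronglyMeasurable (.of_forall fun z => ?_)
  rw [Real.norm_of_nonneg (by positivity), mul_comm]
  exact mul_le_mul_of_nonneg_right (act_sq_le _) (norm_nonneg _)

lemma integral_norm_mul_act_sq_le (hfm : Measurable fhat) (hf1 : Integrable fhat) :
    ∫ z, ‖fhat z.1‖ * act (dotp z.1 x + z.2) ^ 2 ∂paramVolume d M
      ≤ 2 ^ 22 * ∫ ω, ‖fhat ω‖ := by
  have hint := integrable_norm_mul_act_sq M x hfm hf1
  rw [paramVolume] at hint ⊢
  rw [integral_prod _ hint]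
  calc _ ≤ ∫ ω in {ω : Fin d → ℝ | l1norm ω ≤ M}, ‖fhat ω‖ * 2 ^ 22 := by
        refine integral_mono hint.integral_prod_left (hf1.norm.integrableOn.mul_const _) fun ω => ?_
        simp only [integral_const_mul]
        exact mul_le_mul_of_nonneg_left (setIntegral_act_sq_le _ _) (norm_nonneg _)
    _ ≤ ∫ ω, ‖fhat ω‖ * 2 ^ 22 :=
        setIntegral_le_integral (hf1.norm.mul_const _) (.of_forall fun _ => by positivity)
    _ = _ := by rw [integral_mul_const, mul_comm]

lemma ae_sq_barronIntegrand_le (hfmem : MemLp fhat ⊤ volume) :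
    ∀ᵐ z ∂paramVolume d M, barronIntegrand σhat fhat x z ^ 2
      ≤ (2 * Real.pi * σhat)⁻¹ ^ 2 * (eLpNorm fhat ⊤ volume).toReal *
          (‖fhat z.1‖ * act (dotp z.1 x + z.2) ^ 2) := by
  rw [paramVolume]
  filter_upwards [Measure.quasiMeasurePreserving_fst.ae
    (ae_restrict_of_ae (ae_norm_le_eLpNorm_top hfmem))] with z hz
  have h := mul_le_mul_of_nonneg_right hz (norm_nonneg (fhat z.1))
  calc _ ≤ (2 * Real.pi * σhat)⁻¹ ^ 2 * ‖fhat z.1‖ ^ 2 * act (dotp z.1 x + z.2) ^ 2 :=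
        sq_barronIntegrand_le σhat x z
    _ = (2 * Real.pi * σhat)⁻¹ ^ 2 * act (dotp z.1 x + z.2) ^ 2 * (‖fhat z.1‖ * ‖fhat z.1‖) := by
        ring
    _ ≤ (2 * Real.pi * σhat)⁻¹ ^ 2 * act (dotp z.1 x + z.2) ^ 2 *
          ((eLpNorm fhat ⊤ volume).toReal * ‖fhat z.1‖) := by gcongr
    _ = _ := by ring

lemma memLp_barronIntegrand (hfm : Measurable fhat) (hf1 : Integrable fhat)
    (hfmem : MemLp fhat ⊤ volume) :
    MemLp (barronIntegrand σhat fhat x) 2 (paramVolume d M) := by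
  have hmeas : Measurable (barronIntegrand σhat fhat x) := by
    unfold barronIntegrand dotp; fun_prop
  refine (memLp_two_iff_integrable_sq hmeas.aestronglyMeasurable).2 <|
    ((integrable_norm_mul_act_sq M x hfm hf1).const_mul
      ((2 * Real.pi * σhat)⁻¹ ^ 2 * (eLpNorm fhat ⊤ volume).toReal)).mono'
      (hmeas.pow_const 2).aestronglyMeasurable ?_
  filter_upwards [ae_sq_barronIntegrand_le σhat M x hfmem] with z hz
  rwa [Real.norm_of_nonneg (sq_nonneg _)]

lemma integral_sq_barronIntegrand_le (hfm : Measurable fhat) (hf1 : Integrable fhat)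
    (hfmem : MemLp fhat ⊤ volume) :
    ∫ z, barronIntegrand σhat fhat x z ^ 2 ∂paramVolume d M
      ≤ (2 * Real.pi * σhat)⁻¹ ^ 2 * (eLpNorm fhat ⊤ volume).toReal *
          (2 ^ 22 * ∫ ω, ‖fhat ω‖) := by
  refine (integral_mono_ae (memLp_barronIntegrand σhat M x hfm hf1 hfmem).integrable_sq
    ((integrable_norm_mul_act_sq M x hfm hf1).const_mul _)
    (ae_sq_barronIntegrand_le σhat M x hfmem)).trans ?_
  rw [integral_const_mul]
  gcongr
  exact integral_norm_mul_act_sq_le M x hfm hf1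

variable {M} (hM : 0 < M) (hfm : Measurable fhat) (hf1 : Integrable fhat)
  (hfmem : MemLp fhat ⊤ volume)
include hM hfm hf1 hfmem

lemma memLp_barronSample :
    MemLp (barronSample σhat M fhat x) 2 ((P1unif d M).prod (P2unif M)) := by
  have hκ : 0 < Cvol d * M ^ d * (4 * M) := by have := Cvol_pos (d := d); positivity
  rw [P1unif_prod_P2unif hM.le, barronSample_eq]
  exact ((memLp_barronIntegrand σhat M x hfm hf1 hfmem).const_mul _).smul_measure
    (ENNReal.inv_ne_top.2 (ENNReal.ofReal_pos.2 hκ).ne')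

lemma integral_barronSample :
    ∫ z, barronSample σhat M fhat x z ∂(P1unif d M).prod (P2unif M)
      = truncatedBarron σhat M fhat x := by
  have hκ : 0 < Cvol d * M ^ d * (4 * M) := by have := Cvol_pos (d := d); positivity
  have hint := (memLp_barronIntegrand σhat M x hfm hf1 hfmem).integrable one_le_two
  rw [paramVolume] at hint
  rw [integral_P1unif_prod_P2unif hM.le, barronSample_eq, integral_const_mul,
    inv_mul_cancel_left₀ hκ.ne', truncatedBarron, paramVolume, integral_prod _ hint]

lemma integral_sq_barronSample_le :
    ∫ z, barronSample σhat M fhat x z ^ 2 ∂(P1unif d M).prod (P2unif M)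
      ≤ Cvol d * M ^ d * (4 * M) * ((2 * Real.pi * σhat)⁻¹ ^ 2 *
          (eLpNorm fhat ⊤ volume).toReal * (2 ^ 22 * ∫ ω, ‖fhat ω‖)) := by
  have hκ : 0 < Cvol d * M ^ d * (4 * M) := by have := Cvol_pos (d := d); positivity
  rw [integral_P1unif_prod_P2unif hM.le, barronSample_eq]
  simp only [mul_pow (Cvol d * M ^ d * (4 * M))]
  rw [integral_const_mul, ← mul_assoc, sq, inv_mul_cancel_left₀ hκ.ne']
  gcongr
  exact integral_sq_barronIntegrand_le σhat M x hfm hf1 hfmem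

lemma integral_barronSampleError_le {m : ℕ} (hm : m ≠ 0) :
    ∫ q, barronSampleError σhat M fhat q x
        ∂(Measure.pi fun _ : Fin m => (P1unif d M).prod (P2unif M))
      ≤ 1 / m * (Cvol d * M ^ d * (4 * M) * ((2 * Real.pi * σhat)⁻¹ ^ 2 *
          (eLpNorm fhat ⊤ volume).toReal * (2 ^ 22 * ∫ ω, ‖fhat ω‖))) := by
  have := isProbabilityMeasure_P1unif (d := d) hM
  have := isProbabilityMeasure_P2unif hM
  have hg := memLp_barronSample σhat x hM hfm hf1 hfmem
  unfold barronSampleError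
  rw [← integral_barronSample σhat x hM hfm hf1 hfmem, integral_sub_sampleMean_sq hm hg,
    div_eq_inv_mul, one_div]
  gcongr
  exact (variance_le_expectation_sq hg.aestronglyMeasurable).trans
    (integral_sq_barronSample_le σhat x hM hfm hf1 hfmem)

end Barron

lemma volume_le_one_of_subset_unitCube {d : ℕ} {Ω : Set (Fin d → ℝ)}
    (hΩ : Ω ⊆ {x | ∀ i, x i ∈ Set.Icc (0 : ℝ) 1}) : volume Ω ≤ 1 := by
  have hcube : {x : Fin d → ℝ | ∀ i, x i ∈ Set.Icc 0 1} ⊆ Set.univ.pi fun _ => Set.Icc 0 1 :=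
    fun x hx i _ => hx i
  refine (measure_mono (hΩ.trans hcube)).trans_eq ?_
  rw [volume_pi_pi]
  simp

theorem stmt_5_general (σhat : ℝ)
    (hσhat0 : σhat ≠ 0) :
    ∃ C > (0 : ℝ), ∀ (d : ℕ), 1 ≤ d →
      ∀ Ω : Set (Fin d → ℝ), Ω ⊆ {x | ∀ i, x i ∈ Set.Icc (0 : ℝ) 1} → MeasurableSet Ω →
      ∀ M : ℝ, 2 ≤ M → ∀ m : ℕ, 1 ≤ m →
      ∀ fhat : (Fin d → ℝ) → ℂ, Measurable fhat → MemLp fhat ⊤ volume →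
      Integrable (fun ω : Fin d → ℝ => (1 + l1norm ω) * ‖fhat ω‖) →
      (∫ p,
          (∫ x in Ω,
            ((∫ ω in {ω : Fin d → ℝ | l1norm ω ≤ M}, ∫ b in {b : ℝ | |b| ≤ 2 * M},
                (2 * Real.pi * σhat)⁻¹ * act (dotp ω x + b) *
                  (fhat ω * Complex.exp (-(Complex.I * b))).re) -
              (1 / m) * ∑ i : Fin m,
                ((2 * Real.pi * σhat)⁻¹ * (fhat (p.1 i) *
                    Complex.exp (-(Complex.I * p.2 i))).re *
                  ((Cvol d * M ^ d) * (4 * M))) *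
                  act (dotp (p.1 i) x + p.2 i)) ^ 2)
          ∂((Measure.pi fun _ : Fin m => P1unif d M).prod
              (Measure.pi fun _ : Fin m => P2unif M)))
        ≤ (C / m) * Cvol d * M ^ (d + 1) * (eLpNorm fhat ⊤ volume).toReal *
            ∫ ω : Fin d → ℝ, (1 + l1norm ω) * ‖fhat ω‖ := by
  refine ⟨2 ^ 24 * (2 * Real.pi * σhat)⁻¹ ^ 2, by positivity, ?_⟩
  intro d _ Ω hΩ _ M hM m hm fhat hfm hfmem hfint
  have hM0 : 0 < M := by linarith
  have hle (ω : Fin d → ℝ) : ‖fhat ω‖ ≤ (1 + l1norm ω) * ‖fhat ω‖ :=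
    le_mul_of_one_le_left (norm_nonneg _) (le_add_of_nonneg_right (l1norm_nonneg ω))
  have hf1 : Integrable fhat := hfint.mono' hfm.aestronglyMeasurable (.of_forall hle)
  have hfI : ∫ ω, ‖fhat ω‖ ≤ ∫ ω, (1 + l1norm ω) * ‖fhat ω‖ := integral_mono hf1.norm hfint hle
  have := isProbabilityMeasure_P1unif (d := d) hM0
  have := isProbabilityMeasure_P2unif hM0
  -- regard the sample as `m` i.i.d. pairs `(W_i, B_i) ∼ P₁ ⊗ P₂`
  have hT := measurePreserving_arrowProdEquivProdArrow (Fin d → ℝ) ℝ (Fin m)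
    (fun _ => P1unif d M) fun _ => P2unif M
  rw [← hT.integral_comp (MeasurableEquiv.measurableEmbedding _)]
  refine integral_integral_le_of_forall_integral_le (F := barronSampleError σhat M fhat)
    (by simpa using volume_le_one_of_subset_unitCube hΩ)
    (measurable_barronSampleError σhat hfm m).aemeasurable (fun _ _ => sq_nonneg _) ?_ ?_
    fun x => (integral_barronSampleError_le σhat x hM0 hfm hf1 hfmem (by omega)).trans ?_
  · have := Cvol_pos (d := d)
    have := (integral_nonneg fun ω => norm_nonneg (fhat ω)).trans hfI
    positivity
  · exact fun x => ((memLp_const _).sub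
      (memLp_sampleMean (memLp_barronSample σhat x hM0 hfm hf1 hfmem) m)).integrable_sq
  · have := Cvol_pos (d := d)
    calc _ = 2 ^ 24 * (2 * Real.pi * σhat)⁻¹ ^ 2 / m * Cvol d * M ^ (d + 1) *
          (eLpNorm fhat ⊤ volume).toReal * ∫ ω, ‖fhat ω‖ := by ring
      _ ≤ _ := by gcongr

/-- the Monte-Carlo (`L²(Ω)`) error of the random neural network
approximating the truncated Barron representation `f₁`, with i.i.d. weights
`W₁,…,W_m ∼ P₁`, `B₁,…,B_m ∼ P₂` (all independent) and coefficients
`A_i = (2π σ̂(1))⁻¹ Re(f̂(W_i) e^{-i B_i}) / (p₁(W_i) p₂(B_i))`. -/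
theorem stmt_5 (σhat : ℝ)
    (hσhat : (σhat : ℂ) = ∫ t : ℝ, (act t : ℂ) * Complex.exp (-(Complex.I * t)))
    (hσhat0 : σhat ≠ 0) :
    ∃ C > (0 : ℝ), ∀ (d : ℕ), 1 ≤ d →
      ∀ Ω : Set (Fin d → ℝ), Ω ⊆ {x | ∀ i, x i ∈ Set.Icc (0 : ℝ) 1} → MeasurableSet Ω →
      ∀ M : ℝ, 2 ≤ M → ∀ m : ℕ, 1 ≤ m →
      ∀ fhat : (Fin d → ℝ) → ℂ, Measurable fhat → MemLp fhat ⊤ volume →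
      Integrable (fun ω : Fin d → ℝ => (1 + l1norm ω) * ‖fhat ω‖) →
      (∫ p,
          (∫ x in Ω,
            ((∫ ω in {ω : Fin d → ℝ | l1norm ω ≤ M}, ∫ b in {b : ℝ | |b| ≤ 2 * M},
                (2 * Real.pi * σhat)⁻¹ * act (dotp ω x + b) *
                  (fhat ω * Complex.exp (-(Complex.I * b))).re) -
              (1 / m) * ∑ i : Fin m,
                ((2 * Real.pi * σhat)⁻¹ * (fhat (p.1 i) *
                    Complex.exp (-(Complex.I * p.2 i))).re *
                  ((Cvol d * M ^ d) * (4 * M))) *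
                  act (dotp (p.1 i) x + p.2 i)) ^ 2)
          ∂((Measure.pi fun _ : Fin m => P1unif d M).prod
              (Measure.pi fun _ : Fin m => P2unif M)))
        ≤ (C / m) * Cvol d * M ^ (d + 1) * (eLpNorm fhat ⊤ volume).toReal *
            ∫ ω : Fin d → ℝ, (1 + l1norm ω) * ‖fhat ω‖ :=
  stmt_5_general σhat hσhat0
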